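/- The language L = (aa)^+ ∪ (bb)^+ over the alphabet {a, b} is not strictly locally testable: for every k ≥ 2, L is not k-slt. -/

import Mathlib

/-! A `k`-slt language cannot tell `cⁿ` from `cᵐ` once `n, m ≥ k`: both words have the prefix and
suffix `cᵏ⁻¹` and `cᵏ` as their only factor of length `k`. But `a²ᵏ ∈ L` while `a²ᵏ⁺¹ ∉ L`. -/

/-- `L` is `k`-strictly locally testable, as defined by the sets `I` (allowed
prefixes of length `k-1`), `T` (allowed suffixes of length `k-1`) and `F`
(allowed factors of length `k`): membership of words of length `< k` is
unconstrained. -/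
def IsSLTWith {B : Type} (k : ℕ) (I T F : Set (List B)) (L : Set (List B)) : Prop :=
  (∀ w ∈ I, w.length = k - 1) ∧ (∀ w ∈ T, w.length = k - 1) ∧ (∀ w ∈ F, w.length = k) ∧
  ∀ x : List B, k ≤ x.length →
    (x ∈ L ↔ x.take (k - 1) ∈ I ∧ x.drop (x.length - (k - 1)) ∈ T ∧
      ∀ y : List B, y.length = k → y <:+: x → y ∈ F)

/-- `L` is `k`-strictly locally testable. -/
def IsSLT {B : Type} (k : ℕ) (L : Set (List B)) : Prop :=
  ∃ I T F, IsSLTWith k I T F L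

/-- `L ⊆ A⁺` is `(m,k)`-homomorphic: it is the letterwise homomorphic image of a
`k`-slt language `L' ⊆ B⁺` over an alphabet `B` of cardinality `m`. -/
def IsHomomorphic {A : Type} (m k : ℕ) (L : Set (List A)) : Prop :=
  ∃ (B : Type) (instB : Fintype B) (L' : Set (List B)) (π : B → A),
    @Fintype.card B instB = m ∧ IsSLT k L' ∧ [] ∉ L' ∧ L = (List.map π) '' L'

/-- The two-letter alphabet `{a, b}`. -/
inductive Letter : Type
  | a : Letter
  | b : Letter
deriving DecidableEq

instance : Fintype Letter :=
  ⟨{Letter.a, Letter.b}, fun x => by cases x <;> simp⟩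

/-- The language `L = (aa)⁺ ∪ (bb)⁺`. -/
def Leven : Set (List Letter) :=
  {w | ∃ j : ℕ, 1 ≤ j ∧
    (w = List.replicate (2 * j) Letter.a ∨ w = List.replicate (2 * j) Letter.b)}

namespace List

theorem eq_replicate_of_infix_replicate {B : Type} {y : List B} {n : ℕ} {c : B}
    (h : y <:+: replicate n c) : y = replicate y.length c :=
  eq_replicate_iff.mpr ⟨rfl, fun _ hb => eq_of_mem_replicate (h.subset hb)⟩

theorem replicate_infix_replicate {B : Type} {k n : ℕ} (c : B) (hkn : k ≤ n) :
    replicate k c <:+: replicate n c :=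
  ⟨[], replicate (n - k) c, by rw [nil_append, ← replicate_add, Nat.add_sub_cancel' hkn]⟩

end List

open List in
theorem IsSLTWith.replicate_mem_iff {B : Type} {k : ℕ} {I T F L : Set (List B)}
    (hL : IsSLTWith k I T F L) {n : ℕ} (c : B) (hkn : k ≤ n) :
    replicate n c ∈ L ↔ replicate (k - 1) c ∈ I ∧ replicate (k - 1) c ∈ T ∧ replicate k c ∈ F := by
  obtain ⟨-, -, -, hmem⟩ := hL
  have hprefix : (replicate n c).take (k - 1) = replicate (k - 1) c := by
    rw [take_replicate, Nat.min_eq_left (by omega)]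
  have hsuffix : (replicate n c).drop (n - (k - 1)) = replicate (k - 1) c := by
    rw [drop_replicate, Nat.sub_sub_self (by omega)]
  have hfactors : (∀ y : List B, y.length = k → y <:+: replicate n c → y ∈ F) ↔ replicate k c ∈ F :=
    ⟨fun h => h _ length_replicate (replicate_infix_replicate c hkn),
      fun h y hy hinf => by rwa [eq_replicate_of_infix_replicate hinf, hy]⟩
  rw [hmem _ (by rwa [length_replicate]), length_replicate, hprefix, hsuffix, hfactors]

theorem IsSLT.replicate_mem_iff_replicate_mem {B : Type} {k : ℕ} {L : Set (List B)}
    (hL : IsSLT k L) (c : B) {n m : ℕ} (hkn : k ≤ n) (hkm : k ≤ m) :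
    List.replicate n c ∈ L ↔ List.replicate m c ∈ L := by
  obtain ⟨I, T, F, hL⟩ := hL
  rw [hL.replicate_mem_iff c hkn, hL.replicate_mem_iff c hkm]

theorem even_length_of_mem_Leven {w : List Letter} (hw : w ∈ Leven) : Even w.length := by
  obtain ⟨j, -, rfl | rfl⟩ := hw <;> simp

/-- The language `L = (aa)⁺ ∪ (bb)⁺` is not strictly locally
testable: for every `k ≥ 2`, `L` is not `k`-slt. -/
theorem Leven_not_slt : ∀ k : ℕ, 2 ≤ k → ¬ IsSLT k Leven := by
  intro k hk hL
  have heven : List.replicate (2 * k) Letter.a ∈ Leven := ⟨k, by omega, Or.inl rfl⟩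
  have hodd : List.replicate (2 * k + 1) Letter.a ∈ Leven :=
    (hL.replicate_mem_iff_replicate_mem Letter.a (by omega) (by omega)).mp heven
  simpa using even_length_of_mem_Leven hodd
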